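/- arXiv:1102.4859 — 2 statements merged into one kernel-verified Lean document; each statement's English description precedes it below -/
import Mathlib

section
/- In a sum of hermitian squares of noncommutative polynomials, the highest degree terms cannot cancel: if p = Σ_{j=1}^m g_j* g_j for noncommutative polynomials g_j ∈ ℝ⟨x⟩ and deg(p) ≤ 2k, then each g_j has degree at most k. -/
open scoped Matrix BigOperators
noncomputable section

/-- Free noncommutative polynomials in `g` symmetric variables with real coefficients. -/
abbrev NCPoly (g : ℕ) := MonoidAlgebra ℝ (FreeMonoid (Fin g))

namespace NCPoly

variable {g : ℕ}

/-- Reverse a word (the involution on the free monoid). -/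
def wordStar (w : FreeMonoid (Fin g)) : FreeMonoid (Fin g) :=
  FreeMonoid.ofList (FreeMonoid.toList w).reverse

/-- The involution `*` on `ℝ⟨x⟩`, fixing the variables and reversing words. -/
def adj (p : NCPoly g) : NCPoly g := MonoidAlgebra.mapDomain wordStar p

/-- Degree of a noncommutative polynomial. -/
def deg (p : NCPoly g) : ℕ := p.coeff.support.sup fun w => (FreeMonoid.toList w).length

/-- The variable `x_i`. -/
def X (i : Fin g) : NCPoly g := MonoidAlgebra.single (FreeMonoid.of i) 1

/-- Evaluation of `p` at a `g`-tuple of `n × n` real matrices. -/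
def eval {n : ℕ} (X : Fin g → Matrix (Fin n) (Fin n) ℝ) (p : NCPoly g) :
    Matrix (Fin n) (Fin n) ℝ :=
  (MonoidAlgebra.lift ℝ (Matrix (Fin n) (Fin n) ℝ) (FreeMonoid (Fin g)))
    (FreeMonoid.lift X) p

/-- `p` is homogeneous of degree `m`. -/
def Homog (m : ℕ) (p : NCPoly g) : Prop :=
  ∀ w ∈ p.coeff.support, (FreeMonoid.toList w).length = m

end NCPoly

/-- Matrix-valued noncommutative polynomials. -/
abbrev MatPoly (g : ℕ) (I J : Type*) := Matrix I J (NCPoly g)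

namespace MatPoly

variable {g : ℕ}

/-- The involution on matrix polynomials: transpose and star entrywise. -/
def adj {I J : Type*} (P : MatPoly g I J) : MatPoly g J I := fun i j => NCPoly.adj (P j i)

/-- Degree of a matrix polynomial. -/
def deg {I J : Type*} [Fintype I] [Fintype J] (P : MatPoly g I J) : ℕ :=
  Finset.univ.sup fun p : I × J => NCPoly.deg (P p.1 p.2)

/-- Entrywise (Kronecker) evaluation at a tuple of symmetric `n × n` matrices. -/
def eval {I J : Type*} {n : ℕ} (X : Fin g → Matrix (Fin n) (Fin n) ℝ)
    (P : MatPoly g I J) : Matrix (I × Fin n) (J × Fin n) ℝ :=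
  fun ik jl => NCPoly.eval X (P ik.1 jl.1) ik.2 jl.2

/-- `P` is symmetric: `P* = P`. -/
def IsSymmP {I : Type*} (P : MatPoly g I I) : Prop := adj P = P

/-- The monic linear pencil `I - Σ A_j x_j`. -/
def pencil {ℓ : ℕ} (A : Fin g → Matrix (Fin ℓ) (Fin ℓ) ℝ) : MatPoly g (Fin ℓ) (Fin ℓ) :=
  (1 : Matrix (Fin ℓ) (Fin ℓ) (NCPoly g)) -
    ∑ j : Fin g, (A j).map (fun c => MonoidAlgebra.single (FreeMonoid.of j) c)

/-- A tuple of matrices is symmetric. -/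
def SymTuple {n : ℕ} (X : Fin g → Matrix (Fin n) (Fin n) ℝ) : Prop := ∀ j, (X j).IsSymm

/-- Membership in the nc semialgebraic set `𝔓_q` at level `n`. -/
def InP {I : Type*} [Fintype I] (q : MatPoly g I I) {n : ℕ}
    (X : Fin g → Matrix (Fin n) (Fin n) ℝ) : Prop :=
  SymTuple X ∧ (eval X q).PosSemidef

/-- `p` is a sum of hermitian squares of degree at most `α`. -/
def InSigma {ν : ℕ} (α : ℕ) (p : MatPoly g (Fin ν) (Fin ν)) : Prop :=
  ∃ (m : ℕ) (v : Fin m → Fin ν → NCPoly g),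
    (∀ k i, NCPoly.deg (v k i) ≤ α) ∧
    p = fun i j => ∑ k, NCPoly.adj (v k i) * v k j

/-- Membership in the truncated quadratic module `M^ν_{α,β}(q)`. -/
def InM {ℓ ν : ℕ} (α β : ℕ) (q : MatPoly g (Fin ℓ) (Fin ℓ))
    (p : MatPoly g (Fin ν) (Fin ν)) : Prop :=
  ∃ (σ : MatPoly g (Fin ν) (Fin ν)) (m : ℕ)
    (f : Fin m → MatPoly g (Fin ℓ) (Fin ν)),
    InSigma α σ ∧ (∀ k, deg (f k) ≤ β) ∧
    p = σ + ∑ k, adj (f k) * q * f k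

end MatPoly

/-- `σ_#(k) = dim ℝ⟨x⟩_k`. -/
def sigmaSharp (g k : ℕ) : ℕ := ∑ j ∈ Finset.range (k + 1), g ^ j

/-!
Let `w` be a longest word occurring in any `g_j`, say of length `D`. Two words of length at most
`D` multiply to `w* w` only as `w* ⬝ w`, so the coefficient of `w* w` in `Σ g_j* g_j` is
`Σ_j (coeff of w in g_j)²`, which is positive. Hence `deg p ≥ 2D`.
-/

namespace FreeMonoid

variable {α : Type*}

lemma eq_and_eq_of_mul_eq_mul_of_length_le {s t u v : FreeMonoid α}
    (hs : s.toList.length ≤ u.toList.length) (ht : t.toList.length ≤ v.toList.length)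
    (h : s * t = u * v) : s = u ∧ t = v := by
  have hlist : s.toList ++ t.toList = u.toList ++ v.toList := by
    simpa only [toList_mul] using congrArg toList h
  have hlen := congrArg List.length hlist
  simp only [List.length_append] at hlen
  obtain ⟨hsu, htv⟩ := List.append_inj hlist (by omega)
  exact ⟨toList.injective hsu, toList.injective htv⟩

lemma uniqueMul_of_length_le {A B : Finset (FreeMonoid α)} {u v : FreeMonoid α}
    (hA : ∀ s ∈ A, s.toList.length ≤ u.toList.length)
    (hB : ∀ t ∈ B, t.toList.length ≤ v.toList.length) : UniqueMul A B u v :=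
  fun _ _ hs ht h => eq_and_eq_of_mul_eq_mul_of_length_le (hA _ hs) (hB _ ht) h

end FreeMonoid

namespace NCPoly

variable {g : ℕ}

@[simp]
lemma wordStar_wordStar (w : FreeMonoid (Fin g)) : wordStar (wordStar w) = w := by
  simp [wordStar]

lemma wordStar_injective : Function.Injective (wordStar (g := g)) :=
  Function.LeftInverse.injective wordStar_wordStar

@[simp]
lemma length_wordStar (w : FreeMonoid (Fin g)) :
    (wordStar w).toList.length = w.toList.length := by
  simp [wordStar]

lemma coeff_adj (p : NCPoly g) (w : FreeMonoid (Fin g)) :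
    (adj p).coeff w = p.coeff (wordStar w) := by
  conv_lhs => rw [← wordStar_wordStar w]
  exact Finsupp.mapDomain_apply wordStar_injective _ _

lemma length_le_deg {p : NCPoly g} {w : FreeMonoid (Fin g)} (hw : w ∈ p.coeff.support) :
    w.toList.length ≤ deg p :=
  Finset.le_sup (f := fun w => w.toList.length) hw

lemma exists_mem_support_length_eq_deg {p : NCPoly g} (hp : p ≠ 0) :
    ∃ w ∈ p.coeff.support, w.toList.length = deg p := by
  have hsupp : p.coeff.support.Nonempty :=
    Finsupp.support_nonempty_iff.mpr fun h => hp (MonoidAlgebra.coeff_injective h)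
  obtain ⟨w, hw, hlen⟩ := Finset.exists_mem_eq_sup _ hsupp fun w => w.toList.length
  exact ⟨w, hw, hlen.symm⟩

lemma length_le_deg_of_mem_support_adj {p : NCPoly g} {w : FreeMonoid (Fin g)}
    (hw : w ∈ (adj p).coeff.support) : w.toList.length ≤ deg p := by
  rw [Finsupp.mem_support_iff, coeff_adj] at hw
  simpa using length_le_deg (Finsupp.mem_support_iff.mpr hw)

lemma coeff_adj_mul_self_wordStar_mul {p : NCPoly g} {w : FreeMonoid (Fin g)}
    (hw : deg p ≤ w.toList.length) :
    (adj p * p).coeff (wordStar w * w) = p.coeff w ^ 2 := by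
  have hunique : UniqueMul (adj p).coeff.support p.coeff.support (wordStar w) w :=
    FreeMonoid.uniqueMul_of_length_le
      (fun _ hs => by simpa using (length_le_deg_of_mem_support_adj hs).trans hw)
      (fun _ ht => (length_le_deg ht).trans hw)
  rw [MonoidAlgebra.coeff_mul_mul_of_uniqueMul hunique, coeff_adj, wordStar_wordStar, sq]

theorem two_mul_deg_le_deg_sum_adj_mul_self {ι : Type*} {s : Finset ι} {f : ι → NCPoly g}
    {i : ι} (hi : i ∈ s) : 2 * deg (f i) ≤ deg (∑ j ∈ s, adj (f j) * f j) := by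
  obtain ⟨j₀, hj₀, hmax⟩ := Finset.exists_max_image s (fun j => deg (f j)) ⟨i, hi⟩
  have hi_le : deg (f i) ≤ deg (f j₀) := hmax i hi
  rcases eq_or_ne (f j₀) 0 with hzero | hne
  · have : deg (f j₀) = 0 := by simp [hzero, deg]
    omega
  obtain ⟨w, hw, hlen⟩ := exists_mem_support_length_eq_deg hne
  have hcoeff : (∑ j ∈ s, adj (f j) * f j).coeff (wordStar w * w) =
      ∑ j ∈ s, (f j).coeff w ^ 2 := by
    rw [MonoidAlgebra.coeff_sum, Finsupp.finsetSum_apply]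
    exact Finset.sum_congr rfl fun j hj =>
      coeff_adj_mul_self_wordStar_mul (hlen ▸ hmax j hj)
  have hpos : 0 < ∑ j ∈ s, (f j).coeff w ^ 2 :=
    Finset.sum_pos' (fun j _ => sq_nonneg _)
      ⟨j₀, hj₀, pow_two_pos_of_ne_zero (Finsupp.mem_support_iff.mp hw)⟩
  have htop := length_le_deg (Finsupp.mem_support_iff.mpr (hcoeff ▸ hpos.ne'))
  simp only [FreeMonoid.toList_mul, List.length_append, length_wordStar] at htop
  omega

end NCPoly

/-- in a sum of hermitian squares the highest degree terms cannot
cancel: if `p = Σ g_j* g_j` and `deg p ≤ 2k` then each `deg g_j ≤ k`. -/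
theorem stmt1 {g k m : ℕ} (p : NCPoly g) (gs : Fin m → NCPoly g)
    (hrep : p = ∑ j, NCPoly.adj (gs j) * gs j)
    (hdeg : NCPoly.deg p ≤ 2 * k) :
    ∀ j, NCPoly.deg (gs j) ≤ k := by
  intro j
  have := NCPoly.two_mul_deg_le_deg_sum_adj_mul_self (f := gs) (Finset.mem_univ j)
  rw [← hrep] at this
  omega
end
end

section
/- There exists a linear functional λ̂ : ℝ^{ν×ν}⟨x⟩_{2δ} → ℝ that is nonnegative on the truncated quadratic module M^ν_δ = M^ν_{δ,δ−1}(I − Λ_A) and strictly positive on Σ^ν_δ \ {0}, namely λ̂(p) = Σ_{i=1}^∞ 2^{−i} tr(p(X^{(i)})) for a countable dense sequence (X^{(i)}) in the ball B_ε(δ) of g-tuples of symmetric δ×δ matrices of norm ≤ ε contained in 𝔓_{I−Λ_A}. -/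
open scoped Matrix BigOperators
noncomputable section

/-! The functional is `p ↦ tr p(X)` at a single point `X`, which plays the role of the
paper's dense sequence: the tuple `X_j = t (S_j + S_jᵀ)` on the truncated Fock space spanned
by the words of length `≤ δ`, where `S_j` prepends the letter `j`. For a symmetric tuple the
trace of a hermitian square is a sum of squares and `tr (F* q F)(X) ≥ 0` whenever `q(X) ⪰ 0`;
the pencil `I - Λ_A(X) = I - t C` is positive semidefinite for `t` small. Strict positivity is
the absence of polynomial identities of degree `≤ δ` at `X`: if `w` is a longest word of `p`,
the `w`-coordinate of `p(X) e_∅` is `t^|w|` times the coefficient of `w`, since each word `l`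
sends `e_∅` to `t^|l| e_l` plus shorter words. -/

open scoped Kronecker

namespace Matrix

variable {m k : Type*} [Fintype m]

lemma dotProduct_mulVec_le (C : Matrix m m ℝ) (x : m → ℝ) :
    x ⬝ᵥ C *ᵥ x ≤ (∑ p, ∑ q, |C p q|) * (x ⬝ᵥ x) := by
  have hsq : ∀ p, x p * x p ≤ x ⬝ᵥ x := fun p =>
    Finset.single_le_sum (f := fun r => x r * x r) (fun r _ => mul_self_nonneg (x r))
      (Finset.mem_univ p)
  have habs : ∀ p q, |x p| * |x q| ≤ x ⬝ᵥ x := fun p q => by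
    nlinarith [hsq p, hsq q, abs_mul_abs_self (x p), abs_mul_abs_self (x q),
      sq_nonneg (|x p| - |x q|)]
  calc x ⬝ᵥ C *ᵥ x = ∑ p, ∑ q, x p * C p q * x q := by
        simp only [dotProduct, mulVec, Finset.mul_sum, mul_assoc]
    _ ≤ ∑ p, ∑ q, |C p q| * (x ⬝ᵥ x) := by
        refine Finset.sum_le_sum fun p _ => Finset.sum_le_sum fun q _ => ?_
        calc x p * C p q * x q ≤ |x p * C p q * x q| := le_abs_self _
          _ = |C p q| * (|x p| * |x q|) := by rw [abs_mul, abs_mul]; ring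
          _ ≤ |C p q| * (x ⬝ᵥ x) := by gcongr; exact habs p q
    _ = (∑ p, ∑ q, |C p q|) * (x ⬝ᵥ x) := by simp only [Finset.sum_mul]

lemma exists_pos_dotProduct_one_sub_smul_mulVec_nonneg [DecidableEq m] (C : Matrix m m ℝ) :
    ∃ t : ℝ, 0 < t ∧ ∀ x : m → ℝ, 0 ≤ x ⬝ᵥ (1 - t • C) *ᵥ x := by
  set K := ∑ p, ∑ q, |C p q|
  have hK : 0 ≤ K := by positivity
  refine ⟨(K + 1)⁻¹, by positivity, fun x => ?_⟩
  have hx : 0 ≤ x ⬝ᵥ x := Finset.sum_nonneg fun r _ => mul_self_nonneg (x r)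
  have hCx := dotProduct_mulVec_le C x
  rw [sub_mulVec, one_mulVec, smul_mulVec, dotProduct_sub, dotProduct_smul, smul_eq_mul,
    sub_nonneg, inv_mul_le_iff₀ (by positivity)]
  nlinarith

lemma trace_transpose_mul_mul_nonneg [Fintype k] {Q : Matrix m m ℝ}
    (hQ : ∀ y : m → ℝ, 0 ≤ y ⬝ᵥ Q *ᵥ y) (F : Matrix m k ℝ) : 0 ≤ (Fᵀ * Q * F).trace := by
  have hdiag : ∀ c, (Fᵀ * Q * F) c c = (fun p => F p c) ⬝ᵥ Q *ᵥ fun p => F p c := by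
    intro c
    simp only [mul_apply, transpose_apply, dotProduct, mulVec, Finset.sum_mul, Finset.mul_sum]
    rw [Finset.sum_comm]
    exact Finset.sum_congr rfl fun _ _ => Finset.sum_congr rfl fun _ _ => by ring
  exact Finset.sum_nonneg fun c _ => by rw [diag_apply, hdiag c]; exact hQ _

end Matrix

namespace NCPoly

variable {g n : ℕ}

def evalAlgHom (X : Fin g → Matrix (Fin n) (Fin n) ℝ) : NCPoly g →ₐ[ℝ] Matrix (Fin n) (Fin n) ℝ :=
  MonoidAlgebra.lift ℝ (Matrix (Fin n) (Fin n) ℝ) (FreeMonoid (Fin g)) (FreeMonoid.lift X)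

@[simp]
lemma coe_evalAlgHom (X : Fin g → Matrix (Fin n) (Fin n) ℝ) : ⇑(evalAlgHom X) = eval X := rfl

@[simp]
lemma eval_zero (X : Fin g → Matrix (Fin n) (Fin n) ℝ) : eval X 0 = 0 := map_zero (evalAlgHom X)

@[simp]
lemma eval_one (X : Fin g → Matrix (Fin n) (Fin n) ℝ) : eval X 1 = 1 := map_one (evalAlgHom X)

lemma eval_single (X : Fin g → Matrix (Fin n) (Fin n) ℝ) (w : FreeMonoid (Fin g)) (c : ℝ) :
    eval X (MonoidAlgebra.single w c) = c • ((FreeMonoid.toList w).map X).prod := by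
  rw [← coe_evalAlgHom, evalAlgHom, MonoidAlgebra.lift_single, FreeMonoid.lift_apply]

lemma eval_eq_sum (X : Fin g → Matrix (Fin n) (Fin n) ℝ) (p : NCPoly g) :
    eval X p = ∑ w ∈ p.coeff.support, p.coeff w • ((FreeMonoid.toList w).map X).prod := by
  rw [← coe_evalAlgHom, evalAlgHom, MonoidAlgebra.lift_apply, Finsupp.sum]
  simp only [FreeMonoid.lift_apply]

lemma prod_map_wordStar {X : Fin g → Matrix (Fin n) (Fin n) ℝ} (hX : MatPoly.SymTuple X)
    (w : FreeMonoid (Fin g)) :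
    ((FreeMonoid.toList (wordStar w)).map X).prod = (((FreeMonoid.toList w).map X).prod)ᵀ := by
  rw [wordStar, FreeMonoid.toList_ofList, Matrix.transpose_list_prod, List.map_map,
    List.map_reverse]
  congr 3
  exact funext fun j => (hX j).symm

lemma eval_adj {X : Fin g → Matrix (Fin n) (Fin n) ℝ} (hX : MatPoly.SymTuple X) (p : NCPoly g) :
    eval X (adj p) = (eval X p)ᵀ := by
  induction p using MonoidAlgebra.induction_linear with
  | zero => simp [adj]
  | add p q hp hq =>
    simp only [adj, MonoidAlgebra.mapDomain_add, ← coe_evalAlgHom, map_add] at *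
    rw [hp, hq, Matrix.transpose_add]
  | single w c =>
    rw [adj, MonoidAlgebra.mapDomain_single, eval_single, eval_single, prod_map_wordStar hX,
      Matrix.transpose_smul]

end NCPoly

namespace MatPoly

variable {g n : ℕ}

lemma eval_eq_comp {I J : Type*} (X : Fin g → Matrix (Fin n) (Fin n) ℝ) (P : MatPoly g I J) :
    eval X P = Matrix.comp I J (Fin n) (Fin n) ℝ (P.map (NCPoly.eval X)) := rfl

def evalLinearMap {I J : Type*} (X : Fin g → Matrix (Fin n) (Fin n) ℝ) :
    MatPoly g I J →ₗ[ℝ] Matrix (I × Fin n) (J × Fin n) ℝ :=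
  (Matrix.compLinearEquiv I J (Fin n) (Fin n) ℝ ℝ).toLinearMap ∘ₗ
    (NCPoly.evalAlgHom X).toLinearMap.mapMatrix

def traceEval {I : Type*} [Fintype I] (X : Fin g → Matrix (Fin n) (Fin n) ℝ) :
    MatPoly g I I →ₗ[ℝ] ℝ :=
  Matrix.traceLinearMap (I × Fin n) ℝ ℝ ∘ₗ evalLinearMap X

@[simp]
lemma traceEval_apply {I : Type*} [Fintype I] (X : Fin g → Matrix (Fin n) (Fin n) ℝ)
    (P : MatPoly g I I) : traceEval X P = (eval X P).trace := rfl

lemma eval_mul {I K J : Type*} [Fintype K] (X : Fin g → Matrix (Fin n) (Fin n) ℝ)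
    (P : MatPoly g I K) (Q : MatPoly g K J) : eval X (P * Q) = eval X P * eval X Q := by
  ext ⟨i, a⟩ ⟨j, b⟩
  simp [eval_eq_comp, Matrix.mul_apply, Fintype.sum_prod_type, ← NCPoly.coe_evalAlgHom,
    Matrix.sum_apply]

lemma eval_adj {I J : Type*} {X : Fin g → Matrix (Fin n) (Fin n) ℝ} (hX : SymTuple X)
    (P : MatPoly g I J) : eval X (adj P) = (eval X P)ᵀ := by
  ext ⟨i, a⟩ ⟨j, b⟩
  simp [eval_eq_comp, adj, NCPoly.eval_adj hX]

lemma eval_pencil {ℓ : ℕ} (X : Fin g → Matrix (Fin n) (Fin n) ℝ)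
    (A : Fin g → Matrix (Fin ℓ) (Fin ℓ) ℝ) :
    eval X (pencil A) = 1 - ∑ j, A j ⊗ₖ X j := by
  ext ⟨i, a⟩ ⟨k, b⟩
  rw [eval_eq_comp, Matrix.comp_apply, Matrix.map_apply, pencil, Matrix.sub_apply,
    Matrix.sum_apply, ← NCPoly.coe_evalAlgHom, map_sub, map_sum]
  by_cases hik : i = k <;>
    simp [hik, Matrix.one_apply, Prod.ext_iff, NCPoly.eval_single, Matrix.sum_apply]

variable {X : Fin g → Matrix (Fin n) (Fin n) ℝ}

lemma traceEval_adj_mul_mul_nonneg {I J : Type*} [Fintype I] [Fintype J] (hX : SymTuple X)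
    {Q : MatPoly g J J} (hQ : ∀ y, 0 ≤ y ⬝ᵥ eval X Q *ᵥ y) (F : MatPoly g J I) :
    0 ≤ traceEval X (adj F * Q * F) := by
  rw [traceEval_apply, eval_mul, eval_mul, eval_adj hX]
  exact Matrix.trace_transpose_mul_mul_nonneg hQ _

lemma traceEval_adj_mul_self {I J : Type*} [Fintype I] [Fintype J] (hX : SymTuple X)
    (R : MatPoly g J I) : traceEval X (adj R * R) = ((eval X R)ᴴ * eval X R).trace := by
  rw [traceEval_apply, eval_mul, eval_adj hX, Matrix.conjTranspose_eq_transpose_of_trivial]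

lemma traceEval_adj_mul_self_nonneg {I J : Type*} [Fintype I] [Fintype J] (hX : SymTuple X)
    (R : MatPoly g J I) : 0 ≤ traceEval X (adj R * R) := by
  rw [traceEval_adj_mul_self hX]
  exact (Matrix.posSemidef_conjTranspose_mul_self _).trace_nonneg

lemma traceEval_adj_mul_self_eq_zero_iff {I J : Type*} [Fintype I] [Fintype J] (hX : SymTuple X)
    (R : MatPoly g J I) : traceEval X (adj R * R) = 0 ↔ eval X R = 0 := by
  rw [traceEval_adj_mul_self hX, Matrix.trace_conjTranspose_mul_self_eq_zero_iff]

lemma sos_eq_sum_adj_mul_self {ν m : ℕ} (v : Fin m → Fin ν → NCPoly g) :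
    ((fun i j => ∑ k, NCPoly.adj (v k i) * v k j) : MatPoly g (Fin ν) (Fin ν))
      = ∑ k, adj (Matrix.replicateRow Unit (v k)) * Matrix.replicateRow Unit (v k) := by
  ext i j
  simp [Matrix.sum_apply, Matrix.mul_apply, adj]

lemma traceEval_nonneg_of_inSigma {ν α : ℕ} (hX : SymTuple X) {p : MatPoly g (Fin ν) (Fin ν)}
    (hp : InSigma α p) : 0 ≤ traceEval X p := by
  obtain ⟨m, v, -, rfl⟩ := hp
  rw [sos_eq_sum_adj_mul_self, map_sum]
  exact Finset.sum_nonneg fun k _ => traceEval_adj_mul_self_nonneg hX _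

lemma traceEval_nonneg_of_inM {ℓ ν α β : ℕ} (hX : SymTuple X) {q : MatPoly g (Fin ℓ) (Fin ℓ)}
    (hq : ∀ y, 0 ≤ y ⬝ᵥ eval X q *ᵥ y) {p : MatPoly g (Fin ν) (Fin ν)} (hp : InM α β q p) :
    0 ≤ traceEval X p := by
  obtain ⟨σ, m, f, hσ, -, rfl⟩ := hp
  rw [map_add, map_sum]
  exact add_nonneg (traceEval_nonneg_of_inSigma hX hσ)
    (Finset.sum_nonneg fun k _ => traceEval_adj_mul_mul_nonneg hX hq (f k))

end MatPoly

namespace Fock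

abbrev Word (g δ : ℕ) := {l : List (Fin g) // l.length ≤ δ}

instance (g δ : ℕ) : Finite (Word g δ) := (List.finite_length_le (Fin g) δ).to_subtype

def dim (g δ : ℕ) : ℕ := Nat.card (Word g δ)

def basis (g δ : ℕ) : Fin (dim g δ) ≃ Word g δ := (Finite.equivFin _).symm

def creation (g δ : ℕ) (j : Fin g) : Matrix (Fin (dim g δ)) (Fin (dim g δ)) ℝ :=
  Matrix.of fun a b => if (basis g δ a).1 = j :: (basis g δ b).1 then 1 else 0

def tuple (g δ : ℕ) (t : ℝ) (j : Fin g) : Matrix (Fin (dim g δ)) (Fin (dim g δ)) ℝ :=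
  t • (creation g δ j + (creation g δ j)ᵀ)

def vacuum (g δ : ℕ) : Fin (dim g δ) → ℝ := fun a => if (basis g δ a).1 = [] then 1 else 0

variable {g δ : ℕ}

lemma tuple_symmTuple (t : ℝ) : MatPoly.SymTuple (tuple g δ t) := fun j => by
  rw [Matrix.IsSymm, tuple, Matrix.transpose_smul, Matrix.transpose_add, Matrix.transpose_transpose,
    add_comm]

lemma sum_ite_basis_eq {u : List (Fin g)} (hu : u.length ≤ δ) (f : Fin (dim g δ) → ℝ) :
    ∑ b, (if u = (basis g δ b).1 then f b else 0) = f ((basis g δ).symm ⟨u, hu⟩) := by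
  have h : ∀ b, u = (basis g δ b).1 ↔ b = (basis g δ).symm ⟨u, hu⟩ := fun b => by
    rw [Equiv.eq_symm_apply, Subtype.ext_iff, eq_comm]
  simp only [h, Finset.sum_ite_eq', Finset.mem_univ, if_true]

lemma creation_mulVec_apply (j : Fin g) (v : Fin (dim g δ) → ℝ) (a : Fin (dim g δ)) :
    (creation g δ j *ᵥ v) a = ∑ b, if (basis g δ a).1 = j :: (basis g δ b).1 then v b else 0 := by
  simp [Matrix.mulVec, dotProduct, creation]

lemma creation_transpose_mulVec_apply (j : Fin g) (v : Fin (dim g δ) → ℝ) (a : Fin (dim g δ)) :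
    ((creation g δ j)ᵀ *ᵥ v) a
      = ∑ b, if (basis g δ b).1 = j :: (basis g δ a).1 then v b else 0 := by
  simp [Matrix.mulVec, dotProduct, creation]

lemma tuple_mulVec_apply_of_agree {t : ℝ} {l : List (Fin g)} {v : Fin (dim g δ) → ℝ}
    (hv : ∀ b, l.length ≤ (basis g δ b).1.length →
      v b = if (basis g δ b).1 = l then t ^ l.length else 0)
    (j : Fin g) {a : Fin (dim g δ)} (ha : l.length < (basis g δ a).1.length) :
    (tuple g δ t j *ᵥ v) a = if (basis g δ a).1 = j :: l then t ^ (l.length + 1) else 0 := by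
  have hann : ∑ b, (if (basis g δ b).1 = j :: (basis g δ a).1 then v b else 0) = 0 :=
    Finset.sum_eq_zero fun b _ => by
      split_ifs with hb
      · have hlen := congrArg List.length hb
        rw [List.length_cons] at hlen
        rw [hv b (by omega), if_neg fun h => by rw [h] at hlen; omega]
      · rfl
  obtain ⟨i, u, hu⟩ := List.exists_cons_of_ne_nil (List.ne_nil_of_length_pos
    (l.length.zero_le.trans_lt ha))
  have hu_len : u.length ≤ δ := by
    have := (basis g δ a).2
    rw [hu, List.length_cons] at this
    omega
  have hl_len : l.length ≤ u.length := by simpa [hu, Nat.lt_succ_iff] using ha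
  have hcre : ∑ b, (if i :: u = j :: (basis g δ b).1 then v b else 0)
      = if i = j then (if u = l then t ^ l.length else 0) else 0 := by
    simp only [List.cons.injEq]
    by_cases hij : i = j
    · simp only [hij, true_and, sum_ite_basis_eq hu_len, if_true]
      rw [hv _ (by simpa using hl_len), Equiv.apply_symm_apply]
    · simp [hij]
  rw [tuple, Matrix.smul_mulVec, Matrix.add_mulVec, Pi.smul_apply, Pi.add_apply,
    creation_mulVec_apply, creation_transpose_mulVec_apply, hann, add_zero, hu, hcre,
    smul_eq_mul]
  simp only [List.cons.injEq]
  split_ifs <;> simp_all [pow_succ, mul_comm]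

lemma prod_map_tuple_mulVec_vacuum_apply (t : ℝ) (l : List (Fin g)) {a : Fin (dim g δ)}
    (ha : l.length ≤ (basis g δ a).1.length) :
    ((l.map (tuple g δ t)).prod *ᵥ vacuum g δ) a
      = if (basis g δ a).1 = l then t ^ l.length else 0 := by
  induction l generalizing a with
  | nil => simp [vacuum]
  | cons j l ih =>
    rw [List.map_cons, List.prod_cons, ← Matrix.mulVec_mulVec]
    exact tuple_mulVec_apply_of_agree (fun b hb => ih hb) j (by simpa using ha)

lemma eval_tuple_ne_zero {t : ℝ} (ht : t ≠ 0) {p : NCPoly g} (hdeg : p.deg ≤ δ) (hp : p ≠ 0) :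
    NCPoly.eval (tuple g δ t) p ≠ 0 := by
  have hsupp : p.coeff.support.Nonempty :=
    Finsupp.support_nonempty_iff.mpr (mt MonoidAlgebra.coeff_eq_zero.mp hp)
  obtain ⟨w₀, hw₀, hmax⟩ :=
    Finset.exists_max_image p.coeff.support (fun w => (FreeMonoid.toList w).length) hsupp
  have hlen : (FreeMonoid.toList w₀).length ≤ δ :=
    (Finset.le_sup (f := fun w => (FreeMonoid.toList w).length) hw₀).trans hdeg
  set a₀ := (basis g δ).symm ⟨FreeMonoid.toList w₀, hlen⟩
  have ha₀ : (basis g δ a₀).1 = FreeMonoid.toList w₀ := by simp [a₀]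
  have hcoord : (NCPoly.eval (tuple g δ t) p *ᵥ vacuum g δ) a₀
      = p.coeff w₀ * t ^ (FreeMonoid.toList w₀).length := by
    rw [NCPoly.eval_eq_sum, Matrix.sum_mulVec, Finset.sum_apply, Finset.sum_eq_single w₀]
    · rw [Matrix.smul_mulVec, Pi.smul_apply,
        prod_map_tuple_mulVec_vacuum_apply _ _ (congrArg List.length ha₀).ge, if_pos ha₀,
        smul_eq_mul]
    · intro w hw hne
      rw [Matrix.smul_mulVec, Pi.smul_apply,
        prod_map_tuple_mulVec_vacuum_apply _ _ (ha₀ ▸ hmax w hw), ha₀,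
        if_neg fun h => hne (FreeMonoid.toList.injective h.symm), smul_zero]
    · exact fun h => absurd hw₀ h
  intro h
  rw [h, Matrix.zero_mulVec, Pi.zero_apply] at hcoord
  exact mul_ne_zero (Finsupp.mem_support_iff.mp hw₀) (pow_ne_zero _ ht) hcoord.symm

lemma exists_pos_pencil_tuple_nonneg {ℓ : ℕ} (A : Fin g → Matrix (Fin ℓ) (Fin ℓ) ℝ) :
    ∃ t : ℝ, 0 < t ∧ ∀ y, 0 ≤ y ⬝ᵥ MatPoly.eval (tuple g δ t) (MatPoly.pencil A) *ᵥ y := by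
  obtain ⟨t, ht, hC⟩ :=
    Matrix.exists_pos_dotProduct_one_sub_smul_mulVec_nonneg (∑ j, A j ⊗ₖ tuple g δ 1 j)
  have htuple : tuple g δ t = fun j => t • tuple g δ 1 j := by
    funext j
    rw [tuple, tuple, one_smul]
  refine ⟨t, ht, fun y => ?_⟩
  simpa only [MatPoly.eval_pencil, htuple, Matrix.kronecker_smul, Finset.smul_sum] using hC y

lemma traceEval_tuple_pos_of_inSigma {ν : ℕ} {t : ℝ} (ht : t ≠ 0)
    {p : MatPoly g (Fin ν) (Fin ν)} (hp : MatPoly.InSigma δ p) (hp0 : p ≠ 0) :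
    0 < MatPoly.traceEval (tuple g δ t) p := by
  obtain ⟨m, v, hdeg, rfl⟩ := hp
  obtain ⟨k, i, hki⟩ : ∃ k i, v k i ≠ 0 := by
    by_contra! h
    exact hp0 (Matrix.ext fun i j => Finset.sum_eq_zero fun k _ => by rw [h k j, mul_zero])
  rw [MatPoly.sos_eq_sum_adj_mul_self, map_sum]
  refine Finset.sum_pos' (fun k _ => MatPoly.traceEval_adj_mul_self_nonneg (tuple_symmTuple t) _)
    ⟨k, Finset.mem_univ _, ?_⟩
  refine (MatPoly.traceEval_adj_mul_self_nonneg (tuple_symmTuple t) _).lt_of_ne' ?_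
  rw [Ne, MatPoly.traceEval_adj_mul_self_eq_zero_iff (tuple_symmTuple t)]
  intro h
  refine eval_tuple_ne_zero ht (hdeg k i) hki (Matrix.ext fun a b => ?_)
  exact congrFun (congrFun h ((), a)) (i, b)

end Fock

theorem stmt7_general {g ℓ ν d : ℕ} (A : Fin g → Matrix (Fin ℓ) (Fin ℓ) ℝ) :
    ∃ lam : MatPoly g (Fin ν) (Fin ν) →ₗ[ℝ] ℝ,
      (∀ p, MatPoly.InM (d + 1) d (MatPoly.pencil A) p → 0 ≤ lam p) ∧
      (∀ p, MatPoly.InSigma (d + 1) p → p ≠ 0 → 0 < lam p) := by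
  obtain ⟨t, ht, hpencil⟩ := Fock.exists_pos_pencil_tuple_nonneg (δ := d + 1) A
  exact ⟨MatPoly.traceEval (Fock.tuple g (d + 1) t),
    fun p hp => MatPoly.traceEval_nonneg_of_inM (Fock.tuple_symmTuple t) hpencil hp,
    fun p hp hp0 => Fock.traceEval_tuple_pos_of_inSigma ht.ne' hp hp0⟩

/-- existence of a linear functional on matrix polynomials which is
nonnegative on `M^ν_{d+1,d}(I - Λ_A)` and strictly positive on nonzero sums of
hermitian squares of degree at most `d+1`. -/
theorem stmt7 {g ℓ ν d : ℕ} (A : Fin g → Matrix (Fin ℓ) (Fin ℓ) ℝ)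
    (hA : ∀ j, (A j).IsSymm) :
    ∃ lam : MatPoly g (Fin ν) (Fin ν) →ₗ[ℝ] ℝ,
      (∀ p, MatPoly.InM (d + 1) d (MatPoly.pencil A) p → 0 ≤ lam p) ∧
      (∀ p, MatPoly.InSigma (d + 1) p → p ≠ 0 → 0 < lam p) :=
  stmt7_general A
end
end
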